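/- arXiv:1311.6974 — 6 statements merged into one kernel-verified Lean document; each statement's English description precedes it below -/
import Mathlib

section
/- Let A and B be unital rings and φ: A → B a surjective map such that the induced map φ₂ on 2×2 matrices (applying φ entrywise) maps involutions to involutions. Then φ(I)² = I, φ(I) is central in B (hence φ(I) = ±I if B has trivial center consisting of scalars ±1 candidates), φ(-I) = -φ(I), and φ(0) = 0. -/
theorem stmt_8 (A B : Type*) [Ring A] [Ring B] (φ : A → B)
    (hsurj : Function.Surjective φ)
    (hinv : ∀ M : Matrix (Fin 2) (Fin 2) A, M * M = 1 → (M.map φ) * (M.map φ) = 1) :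
    φ 1 * φ 1 = 1 ∧ (∀ b : B, φ 1 * b = b * φ 1) ∧ φ (-1) = -φ 1 ∧ φ 0 = 0 := by
  have key : ∀ b : B, φ 1 * φ 1 + b * φ 0 = 1 ∧ φ 1 * b + b * φ (-1) = 0 ∧
      φ 0 * b + φ (-1) * φ (-1) = 1 := by
    intro b
    obtain ⟨a, rfl⟩ := hsurj b
    have h := hinv !![1, a; 0, -1] (by
      rw [Matrix.mul_fin_two, Matrix.one_fin_two]; norm_num)
    have hmap : (!![1, a; 0, -1] : Matrix (Fin 2) (Fin 2) A).map φ
        = !![φ 1, φ a; φ 0, φ (-1)] := by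
      ext i j; fin_cases i <;> fin_cases j <;> simp [Matrix.map_apply]
    rw [hmap, Matrix.mul_fin_two, Matrix.one_fin_two] at h
    refine ⟨?_, ?_, ?_⟩
    · have := congrFun (congrFun h 0) 0; simpa using this
    · have := congrFun (congrFun h 0) 1; simpa using this
    · have := congrFun (congrFun h 1) 1; simpa using this
  have hsq : φ 1 * φ 1 = 1 := by have := (key 0).1; simpa using this
  have hz : φ 0 = 0 := by
    have := (key 1).1
    rw [hsq, one_mul] at this
    exact add_eq_left.mp this
  have hneg : φ (-1) = -φ 1 := by
    have := (key 1).2.1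
    rw [mul_one, one_mul] at this
    exact eq_neg_of_add_eq_zero_right this
  refine ⟨hsq, ?_, hneg, hz⟩
  intro b
  have := (key b).2.1
  rw [hneg, mul_neg, ← sub_eq_add_neg, sub_eq_zero] at this
  exact this
end

section
/- Let A and B be unital rings and φ: A → B a map such that the induced entrywise map φ₂ on 2×2 matrices preserves involutions in both directions (M is an involution in M₂(A) iff φ₂(M) is an involution in M₂(B)). Then φ is injective. -/
theorem stmt_9 (A B : Type*) [Ring A] [Ring B] (φ : A → B)
    (hinv : ∀ M : Matrix (Fin 2) (Fin 2) A, M * M = 1 ↔ (M.map φ) * (M.map φ) = 1) :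
    Function.Injective φ := by
  intro a b hab
  set M : Matrix (Fin 2) (Fin 2) A := !![b, 1; 1 - b*b, -b] with hMdef
  set N : Matrix (Fin 2) (Fin 2) A := !![a, 1; 1 - b*b, -b] with hNdef
  have hM : M * M = 1 := by
    ext i j
    fin_cases i <;> fin_cases j <;>
      simp [hMdef, Matrix.mul_apply, Fin.sum_univ_two, Matrix.one_apply] <;> noncomm_ring
  have hmap : N.map φ = M.map φ := by
    ext i j
    fin_cases i <;> fin_cases j <;> simp [hMdef, hNdef, hab]
  have hN : N * N = 1 := by
    rw [hinv, hmap, ← hinv]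
    exact hM
  have h01 := congrFun (congrFun hN 0) 1
  simp [hNdef, Matrix.mul_apply, Fin.sum_univ_two, Matrix.one_apply] at h01
  rwa [add_neg_eq_zero] at h01
end

section
/- Let A and B be unital rings and φ: A → B a surjective map with φ(I) = I and φ(0) = 0, such that the entrywise map φ₂ on 2×2 matrices sends involutions to involutions. Then for all T, S ∈ A with TS = ST = 0, one has φ(T)φ(S) = φ(S)φ(T) = 0. -/
theorem stmt_10 (A B : Type*) [Ring A] [Ring B] (φ : A → B)
    (hsurj : Function.Surjective φ) (h1 : φ 1 = 1) (h0 : φ 0 = 0)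
    (hinv : ∀ M : Matrix (Fin 2) (Fin 2) A, M * M = 1 → (M.map φ) * (M.map φ) = 1) :
    ∀ T S : A, T * S = 0 → S * T = 0 → φ T * φ S = 0 ∧ φ S * φ T = 0 := by
  have key : ∀ T S : A, T * S = 0 → S * T = 0 →
      φ T * φ S = 1 - φ 1 * φ 1 ∧ φ S * φ T = 1 - φ (-1) * φ (-1) := by
    intro T S hTS hST
    have hM : (!![(1:A), T; S, -1] : Matrix (Fin 2) (Fin 2) A) * !![(1:A), T; S, -1] = 1 := by
      ext i j
      fin_cases i <;> fin_cases j <;>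
        simp [Matrix.mul_apply, Fin.sum_univ_two, hTS, hST, Matrix.one_apply]
    have h := hinv _ hM
    have hmap : (!![(1:A), T; S, -1] : Matrix (Fin 2) (Fin 2) A).map φ
        = !![φ 1, φ T; φ S, φ (-1)] := by
      ext i j; fin_cases i <;> fin_cases j <;> simp [Matrix.map_apply]
    rw [hmap] at h
    have h00 := congrFun (congrFun h 0) 0
    have h11 := congrFun (congrFun h 1) 1
    simp [Matrix.mul_apply, Fin.sum_univ_two, Matrix.one_apply] at h00 h11
    exact ⟨eq_sub_of_add_eq' h00, eq_sub_of_add_eq h11⟩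
  intro T S hTS hST
  have hx := (key 0 0 (by simp) (by simp)).2
  rw [h0, zero_mul] at hx
  have hx2 : φ (-1) * φ (-1) = 1 := (eq_of_sub_eq_zero hx.symm).symm
  obtain ⟨hA, hB⟩ := key T S hTS hST
  rw [h1] at hA
  exact ⟨by rw [hA]; simp, by rw [hB, hx2]; simp⟩
end

section
/- Let A and B be unital rings and φ: A → B a surjective map with φ(I) = I and φ(0) = 0, such that the entrywise map φ₂ on 2×2 matrices sends involutions to involutions. Then for every T ∈ A, φ(T)² + φ(I - T²) = I. -/
theorem stmt_11 (A B : Type*) [Ring A] [Ring B] (φ : A → B)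
    (hsurj : Function.Surjective φ) (h1 : φ 1 = 1) (h0 : φ 0 = 0)
    (hinv : ∀ M : Matrix (Fin 2) (Fin 2) A, M * M = 1 → (M.map φ) * (M.map φ) = 1) :
    ∀ T : A, φ T * φ T + φ (1 - T ^ 2) = 1 := by
  intro T
  have hM : (!![T, 1; 1 - T ^ 2, -T] : Matrix (Fin 2) (Fin 2) A) *
      !![T, 1; 1 - T ^ 2, -T] = 1 := by
    ext i j
    fin_cases i <;> fin_cases j <;>
      simp [Matrix.mul_apply, Fin.sum_univ_two, Matrix.one_apply] <;> noncomm_ring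
  have h := hinv _ hM
  have h00 := congrFun (congrFun h 0) 0
  simpa [Matrix.mul_apply, Fin.sum_univ_two, Matrix.one_apply, h1] using h00
end

section
/- Let A and B be unital rings in which 2 is invertible, and φ: A → B a surjective map with φ(I) = I, φ(0) = 0, satisfying: (i) φ(T)² + φ(I - T²) = I for all T, and (ii) φ(T)φ(S) = 0 whenever TS = ST = 0. Then φ maps idempotents to idempotents: P² = P implies φ(P)² = φ(P). -/
theorem stmt_12 (A B : Type*) [Ring A] [Ring B] [Invertible (2 : A)] [Invertible (2 : B)]
    (φ : A → B) (hsurj : Function.Surjective φ) (h1 : φ 1 = 1) (h0 : φ 0 = 0)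
    (hi : ∀ T : A, φ T * φ T + φ (1 - T ^ 2) = 1)
    (hii : ∀ T S : A, T * S = 0 → S * T = 0 → φ T * φ S = 0) :
    ∀ P : A, P ^ 2 = P → φ P * φ P = φ P := by
  intro P hP
  have hPP : P * P = P := by rw [← sq]; exact hP
  set x := φ P with hx
  set y := φ (1 - P) with hy
  have hPQ : P * (1 - P) = 0 := by rw [mul_sub, mul_one, hPP, sub_self]
  have hQP : (1 - P) * P = 0 := by rw [sub_mul, one_mul, hPP, sub_self]
  have hxy : x * y = 0 := hii P (1 - P) hPQ hQP
  have e1 : x * x + y = 1 := by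
    have := hi P
    rwa [hP] at this
  have e2 : y * y + x = 1 := by
    have := hi (1 - P)
    have h2 : 1 - (1 - P) ^ 2 = P := by rw [sq, mul_sub, sub_mul, sub_mul, hPP]; noncomm_ring
    rwa [h2] at this
  have hxx : x * x = 1 - y := eq_sub_of_add_eq e1
  have hy2 : y * y = y := by
    have h3 : x * x * y = (1 - y) * y := by rw [hxx]
    rw [mul_assoc, hxy, mul_zero, sub_mul, one_mul] at h3
    exact (sub_eq_zero.mp h3.symm).symm
  have hxval : x = 1 - y := by
    rw [hy2] at e2
    exact eq_sub_of_add_eq (by rw [add_comm]; exact e2)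
  rw [hxx, hxval]
end

section
/- Let X be a vector space over a field, T: X → X linear, and suppose for every x ∈ X the vectors Tx and φ(T)x are linearly dependent, where φ(T): X → X is linear. If T is not of rank one, then there exists a scalar λ with φ(T) = λT. -/
theorem stmt_17 (K : Type*) [Field K] (X : Type*) [AddCommGroup X] [Module K X]
    (T S : X →ₗ[K] X)
    (hdep : ∀ x : X, ¬ LinearIndependent K ![T x, S x])
    (hrank : ¬ Module.rank K (LinearMap.range T) ≤ 1) :
    ∃ lam : K, S = lam • T := by
  -- Step 1: for every nonzero T x, S x is a multiple of T x
  have hloc : ∀ x : X, T x ≠ 0 → ∃ c : K, S x = c • T x := by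
    intro x hx
    have := hdep x
    rw [LinearIndependent.pair_iff' hx] at this
    push_neg at this
    obtain ⟨a, ha⟩ := this
    exact ⟨a, ha.symm⟩
  -- From the rank hypothesis: for every vector in the range there is another one
  -- which is not a multiple of it.
  have hbig : ∀ u : X, ∃ y : X, ∀ r : K, T y ≠ r • T u := by
    intro u
    by_contra h
    push_neg at h
    apply hrank
    rw [rank_le_one_iff]
    refine ⟨⟨T u, LinearMap.mem_range_self T u⟩, ?_⟩
    rintro ⟨v, y, rfl⟩
    obtain ⟨r, hr⟩ := h y
    exact ⟨r, Subtype.ext (by simpa using hr.symm)⟩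
  -- there is u with T u ≠ 0
  obtain ⟨u, hu⟩ : ∃ u : X, T u ≠ 0 := by
    obtain ⟨y, hy⟩ := hbig 0
    exact ⟨y, by simpa using hy 0⟩
  -- Step 2: kernel of T is contained in kernel of S
  have hker : ∀ x : X, T x = 0 → S x = 0 := by
    intro x hx
    obtain ⟨v, hv⟩ := hbig u
    have hv0 : T v ≠ 0 := by simpa using hv 0
    have h1 : T (x + u) = T u := by simp [hx]
    have h2 : T (x + v) = T v := by simp [hx]
    obtain ⟨a, ha⟩ := hloc (x + u) (by rw [h1]; exact hu)
    obtain ⟨b, hb⟩ := hloc u hu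
    obtain ⟨c, hc⟩ := hloc (x + v) (by rw [h2]; exact hv0)
    obtain ⟨d, hd⟩ := hloc v hv0
    rw [h1] at ha; rw [h2] at hc
    have hSx1 : S x = (a - b) • T u := by
      have := ha
      rw [map_add, hb] at this
      rw [sub_smul]
      exact eq_sub_of_add_eq this
    have hSx2 : S x = (c - d) • T v := by
      have := hc
      rw [map_add, hd] at this
      rw [sub_smul]
      exact eq_sub_of_add_eq this
    by_cases hcd : c - d = 0
    · rw [hSx2, hcd, zero_smul]
    · exfalso
      apply hv ((c - d)⁻¹ * (a - b))
      rw [mul_smul, ← hSx1, hSx2, smul_smul, inv_mul_cancel₀ hcd, one_smul]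
  -- Step 3: consistency lemma: if T w, T x are "independent" then scalars agree
  have hcons : ∀ w x : X, T w ≠ 0 → (∀ r : K, T x ≠ r • T w) →
      ∀ μ c : K, S w = μ • T w → S x = c • T x → c = μ := by
    intro w x hw hind μ c hμ hc
    have hx0 : T x ≠ 0 := by
      intro h; exact hind 0 (by simp [h])
    have hli : LinearIndependent K ![T w, T x] :=
      (LinearIndependent.pair_iff' hw).2 (fun a ha => hind a ha.symm)
    have hsum : T (w + x) ≠ 0 := by
      intro h
      rw [map_add] at h
      have := (LinearIndependent.pair_iff.1 hli 1 1 (by simpa using h)).1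
      exact one_ne_zero this
    obtain ⟨d, hd⟩ := hloc (w + x) hsum
    rw [map_add, map_add, hμ, hc, smul_add] at hd
    have key : (μ - d) • T w + (c - d) • T x = 0 := by
      rw [sub_smul, sub_smul, sub_add_sub_comm, hd, sub_self]
    have := LinearIndependent.pair_iff.1 hli (μ - d) (c - d) key
    have h1 : μ = d := sub_eq_zero.1 this.1
    have h2 : c = d := sub_eq_zero.1 this.2
    rw [h1, h2]
  obtain ⟨lam, hlam⟩ := hloc u hu
  refine ⟨lam, ?_⟩
  ext x
  simp only [LinearMap.smul_apply]
  by_cases hx : T x = 0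
  · rw [hx, hker x hx, smul_zero]
  obtain ⟨c, hc⟩ := hloc x hx
  by_cases hind : ∀ r : K, T x ≠ r • T u
  · rw [hc, hcons u x hu hind lam c hlam hc]
  · push_neg at hind
    obtain ⟨r, hr⟩ := hind
    have hr0 : r ≠ 0 := by
      intro h
      rw [h, zero_smul] at hr
      exact hx hr
    obtain ⟨v, hv⟩ := hbig u
    have hv0 : T v ≠ 0 := by simpa using hv 0
    have hvind : ∀ s : K, T x ≠ s • T v := by
      intro s hs
      have hs0 : s ≠ 0 := by
        intro h; rw [h, zero_smul] at hs; exact hx hs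
      apply hv (s⁻¹ * r)
      rw [mul_smul, ← hr, hs, smul_smul, inv_mul_cancel₀ hs0, one_smul]
    obtain ⟨e, he⟩ := hloc v hv0
    have hev : e = lam := hcons u v hu hv lam e hlam he
    rw [hc, hcons v x hv0 hvind e c (hev ▸ he) hc, hev]
end
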